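/- For α ≥ 0 an integer and z > 0: lim_{n→∞} n^{−α}·𝓛_n^α(z/n) = z^{−α/2}·J_α(2√z), where J_α is the Bessel function of the first kind. -/

import Mathlib

open Real Finset

/-- Generalized Laguerre polynomial `𝓛_n^α(x)`. -/
noncomputable def glag (α : ℝ) (n : ℕ) (x : ℝ) : ℝ :=
  ∑ k ∈ Finset.range (n + 1),
    (-1 : ℝ) ^ k * Real.Gamma ((n : ℝ) + α + 1) /
      (Real.Gamma ((k : ℝ) + α + 1) * (Nat.factorial (n - k) : ℝ) * (Nat.factorial k : ℝ)) * x ^ k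

/-- Rescaled (Sonine) Laguerre polynomial `L_n^α(x) = 𝓛_n^α(x)/Γ(n+α+1)`. -/
noncomputable def slag (α : ℝ) (n : ℕ) (x : ℝ) : ℝ :=
  glag α n x / Real.Gamma ((n : ℝ) + α + 1)

/-- Rescaled Laguerre polynomial with integer index, zero for negative index. -/
noncomputable def slagZ (α : ℝ) (m : ℤ) (x : ℝ) : ℝ :=
  if 0 ≤ m then slag α m.toNat x else 0

/-- The Bessel function of the first kind J_α, defined by its power series. -/
noncomputable def besselJ (α : ℝ) (x : ℝ) : ℝ :=
  ∑' m : ℕ, ((-1 : ℝ) ^ m / ((Nat.factorial m : ℝ) * Real.Gamma ((m : ℝ) + α + 1))) *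
    (x / 2) ^ (2 * (m : ℝ) + α)

/-! Expanding the sum, `n^{-α} 𝓛_n^α(z/n) = ∑_{k ≤ n} (-z)^k / (k! Γ(k+α+1)) · r_{n,k}` with
`r_{n,k} = (n+α)! / ((n-k)! n^{k+α})`, a falling factorial of length `k+α` divided by `n^{k+α}`.
Each `r_{n,k}` tends to `1` and is at most `2^{k+α}` once `n ≥ α`, so the terms are dominated by
`2^α (2|z|)^k / k!`. Tannery's theorem moves the limit inside the sum, which leaves the power series
of `z^{-α/2} J_α(2√z)`. -/

open Filter Topology Asymptotics

theorem tendsto_descFactorial_add_div_pow (a j : ℕ) :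
    Tendsto (fun n : ℕ => ((n + a).descFactorial j : ℝ) / (n : ℝ) ^ j) atTop (𝓝 1) := by
  have h_shift : (fun n : ℕ => ((n + a).descFactorial j : ℝ)) ~[atTop]
      fun n : ℕ => ((n + a : ℕ) : ℝ) ^ j :=
    (isEquivalent_descFactorial j).comp_tendsto (tendsto_add_atTop_nat a)
  have h_add : (fun n : ℕ => ((n + a : ℕ) : ℝ)) ~[atTop] fun n : ℕ => (n : ℝ) := by
    push_cast
    exact IsEquivalent.refl.add_isLittleO (isLittleO_const_left.2
      (Or.inr (tendsto_norm_atTop_atTop.comp tendsto_natCast_atTop_atTop)))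
  refine (isEquivalent_iff_tendsto_one ?_).1 (h_shift.trans (h_add.pow j))
  filter_upwards [eventually_ne_atTop 0] with n hn
  positivity

theorem descFactorial_add_div_pow_le {a n : ℕ} (han : a ≤ n) (j : ℕ) :
    ((n + a).descFactorial j : ℝ) / (n : ℝ) ^ j ≤ 2 ^ j := by
  rcases Nat.eq_zero_or_pos n with rfl | hn
  · obtain rfl : a = 0 := Nat.le_zero.1 han
    rcases j with _ | j <;> simp
  rw [div_le_iff₀ (by positivity), ← mul_pow]
  calc ((n + a).descFactorial j : ℝ) ≤ ((n + a : ℕ) : ℝ) ^ j :=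
        mod_cast Nat.descFactorial_le_pow _ _
    _ ≤ (2 * n) ^ j := by gcongr; push_cast; linarith [(Nat.cast_le (α := ℝ)).2 han]

theorem Real.Gamma_natCast_add_natCast_add_one (k a : ℕ) :
    Gamma ((k : ℝ) + a + 1) = (k + a).factorial := by
  exact_mod_cast Real.Gamma_nat_eq_factorial (k + a)

theorem rpow_neg_half_mul_besselJ_two_mul_sqrt (α : ℝ) {z : ℝ} (hz : 0 < z) :
    z ^ (-α / 2) * besselJ α (2 * √z) =
      ∑' k : ℕ, (-z) ^ k / ((k.factorial : ℝ) * Gamma ((k : ℝ) + α + 1)) := by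
  rw [besselJ, ← tsum_mul_left]
  congr 1 with k
  have hpow : z ^ (-α / 2) * √z ^ (2 * (k : ℝ) + α) = z ^ k := by
    rw [sqrt_eq_rpow, ← rpow_mul hz.le, ← rpow_add hz, ← rpow_natCast]
    congr 1
    ring
  rw [mul_div_cancel_left₀ _ two_ne_zero, neg_pow, mul_left_comm, hpow]
  ring

noncomputable def mehlerHeineTerm (α : ℕ) (z : ℝ) (n k : ℕ) : ℝ :=
  (-z) ^ k / ((k.factorial : ℝ) * Gamma ((k : ℝ) + α + 1)) *
    ((n + α).descFactorial (k + α) / (n : ℝ) ^ (k + α))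

theorem rpow_neg_mul_glag_div_eq_tsum_mehlerHeineTerm (α : ℕ) (z : ℝ) {n : ℕ} (hn : 0 < n) :
    (n : ℝ) ^ (-(α : ℝ)) * glag α n (z / n) = ∑' k : ℕ, mehlerHeineTerm α z n k := by
  have h_vanish : ∀ k ∉ Finset.range (n + 1), mehlerHeineTerm α z n k = 0 := by
    intro k hk
    rw [mehlerHeineTerm, Nat.descFactorial_eq_zero_iff_lt.2 (by simp at hk; omega)]
    simp
  rw [tsum_eq_sum h_vanish, glag, Finset.mul_sum]
  refine Finset.sum_congr rfl fun k hk => ?_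
  have hkn : k ≤ n := Nat.lt_succ_iff.1 (Finset.mem_range.1 hk)
  have hfac : ((n - k).factorial : ℝ) * (n + α).descFactorial (k + α) = (n + α).factorial := by
    have := Nat.factorial_mul_descFactorial (show k + α ≤ n + α by omega)
    rw [show n + α - (k + α) = n - k by omega] at this
    exact_mod_cast this
  have hG : 0 < Gamma ((k : ℝ) + α + 1) := Gamma_pos_of_pos (by positivity)
  rw [mehlerHeineTerm, Real.Gamma_natCast_add_natCast_add_one n α, ← hfac,
    rpow_neg (by positivity), rpow_natCast, div_pow, pow_add]
  field_simp
  ring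

theorem tendsto_mehlerHeineTerm (α : ℕ) (z : ℝ) (k : ℕ) :
    Tendsto (mehlerHeineTerm α z · k) atTop
      (𝓝 ((-z) ^ k / ((k.factorial : ℝ) * Gamma ((k : ℝ) + α + 1)))) := by
  simpa [mehlerHeineTerm] using
    tendsto_const_nhds.mul (tendsto_descFactorial_add_div_pow α (k + α))

theorem abs_mehlerHeineTerm_le {α n : ℕ} (hαn : α ≤ n) (z : ℝ) (k : ℕ) :
    |mehlerHeineTerm α z n k| ≤ 2 ^ α * ((2 * |z|) ^ k / k.factorial) := by
  have hG : (1 : ℝ) ≤ Gamma ((k : ℝ) + α + 1) := by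
    rw [Real.Gamma_natCast_add_natCast_add_one]
    exact_mod_cast Nat.one_le_iff_ne_zero.2 (Nat.factorial_ne_zero _)
  rw [mehlerHeineTerm, abs_mul, abs_div, abs_of_nonneg (by positivity : (0 : ℝ) ≤ _ / _),
    abs_pow, abs_neg, abs_of_pos (by positivity : (0 : ℝ) < _ * _)]
  calc |z| ^ k / (k.factorial * Gamma ((k : ℝ) + α + 1)) *
        ((n + α).descFactorial (k + α) / (n : ℝ) ^ (k + α))
      ≤ |z| ^ k / (k.factorial * 1) * 2 ^ (k + α) := by
        gcongr
        exact descFactorial_add_div_pow_le hαn _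
    _ = 2 ^ α * ((2 * |z|) ^ k / k.factorial) := by ring

/-- Mehler–Heine asymptotics: n^{−α}·𝓛_n^α(z/n) → z^{−α/2}·J_α(2√z) as n → ∞. -/
theorem laguerre_mehler_heine (α : ℕ) (z : ℝ) (hz : 0 < z) :
    Filter.Tendsto (fun n : ℕ => (n : ℝ) ^ (-(α : ℝ)) * glag (α : ℝ) n (z / (n : ℝ)))
      Filter.atTop
      (nhds (z ^ (-(α : ℝ) / 2) * besselJ (α : ℝ) (2 * Real.sqrt z))) := by
  have h_bound : ∀ᶠ n in atTop, ∀ k,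
      ‖mehlerHeineTerm α z n k‖ ≤ 2 ^ α * ((2 * |z|) ^ k / k.factorial) :=
    (eventually_ge_atTop α).mono fun n hαn k => abs_mehlerHeineTerm_le hαn z k
  rw [rpow_neg_half_mul_besselJ_two_mul_sqrt _ hz]
  refine (tendsto_tsum_of_dominated_convergence
      ((summable_pow_div_factorial (2 * |z|)).mul_left _) (tendsto_mehlerHeineTerm α z)
      h_bound).congr' ?_
  filter_upwards [eventually_gt_atTop 0] with n hn
  exact (rpow_neg_mul_glag_div_eq_tsum_mehlerHeineTerm α z hn).symm
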